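/- arXiv:1711.08104 — 4 statements merged into one kernel-verified Lean document; each statement's English description precedes it below -/
import Mathlib

section
/- If u, v ∈ L²(𝕋¹) have Fourier coefficients satisfying |k|^p|û_k| ≤ 𝔲 and |k|^q|v̂_k| ≤ 𝔳 for all k ≠ 0 (with |û_0| ≤ 𝔲, |v̂_0| ≤ 𝔳), where 1 ≤ q < p are exponents, then the product w = uv satisfies |k|^q|ŵ_k| ≤ C_{p,q}·𝔲·𝔳 for all k ≠ 0, with C_{p,q} a constant depending only on p and q. -/
/-!
By Parseval, the Fourier coefficients of `uv` are the convolution `ŵ_k = ∑ⱼ û_{k-j} v̂_j`.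
Writing `⟨i⟩ = max 1 |i|`, we have `⟨k⟩ ≤ 2 max(⟨k-j⟩, ⟨j⟩)`, and since `q ≤ p` the product
`⟨k-j⟩^{-p} ⟨j⟩^{-q}` is at most `max(⟨k-j⟩, ⟨j⟩)^{-q} min(⟨k-j⟩, ⟨j⟩)^{-p}`. Hence each term
of `|k|^q |ŵ_k|` is bounded by `2^q 𝔲 𝔳 (⟨k-j⟩^{-p} + ⟨j⟩^{-p})`, which sums to
`2^{q+1} 𝔲 𝔳 ∑ⱼ ⟨j⟩^{-p}`, finite because `p > 1`.
-/

open MeasureTheory Real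

/-- Fourier coefficient of a `2π`-periodic function on the torus `[-π,π]`. -/
noncomputable def fc (f : ℝ → ℂ) (k : ℤ) : ℂ :=
  (1 / (2 * π)) * ∫ x in (-π)..π, f x * Complex.exp (-Complex.I * k * x)

open AddCircle ComplexConjugate

section Parseval

variable {T : ℝ} [Fact (0 < T)]

lemma integral_conj_mul_eq_tsum_fourierCoeff {F G : AddCircle T → ℂ}
    (hF : MemLp F 2 haarAddCircle) (hG : MemLp G 2 haarAddCircle) :
    ∫ t, conj (F t) * G t ∂haarAddCircle
      = ∑' j : ℤ, conj (fourierCoeff F j) * fourierCoeff G j := by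
  calc ∫ t, conj (F t) * G t ∂haarAddCircle
      = inner ℂ (hF.toLp F) (hG.toLp G) := by
        rw [L2.inner_def]
        refine integral_congr_ae ?_
        filter_upwards [hF.coeFn_toLp, hG.coeFn_toLp] with t hFt hGt
        rw [hFt, hGt, RCLike.inner_apply']
    _ = inner ℂ (fourierBasis.repr (hF.toLp F)) (fourierBasis.repr (hG.toLp G)) :=
        (fourierBasis.repr.inner_map_map _ _).symm
    _ = ∑' j : ℤ, conj (fourierCoeff F j) * fourierCoeff G j := by
        simp only [lp.inner_eq_tsum, RCLike.inner_apply', fourierBasis_repr,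
          fourierCoeff_congr_ae hF.coeFn_toLp, fourierCoeff_congr_ae hG.coeFn_toLp]

lemma fourierCoeff_fourier_mul_conj (f : AddCircle T → ℂ) (k j : ℤ) :
    fourierCoeff (fun t => fourier k t * conj (f t)) j = conj (fourierCoeff f (k - j)) := by
  rw [fourierCoeff, fourierCoeff, ← integral_conj]
  refine integral_congr_ae (ae_of_all _ fun t => ?_)
  simp only [smul_eq_mul, map_mul, ← fourier_neg, ← mul_assoc, ← fourier_add, neg_sub]
  ring_nf

lemma fourierCoeff_mul_eq_tsum {f g : AddCircle T → ℂ}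
    (hf : MemLp f 2 haarAddCircle) (hg : MemLp g 2 haarAddCircle) (k : ℤ) :
    fourierCoeff (fun t => f t * g t) k
      = ∑' j : ℤ, fourierCoeff f (k - j) * fourierCoeff g j := by
  have hF : MemLp (fun t => fourier k t * conj (f t)) 2 haarAddCircle := by
    refine hf.star.of_le ((map_continuous _).aestronglyMeasurable.mul hf.star.1)
      (ae_of_all _ fun t => ?_)
    simp [Circle.norm_coe]
  calc fourierCoeff (fun t => f t * g t) k
      = ∫ t, conj (fourier k t * conj (f t)) * g t ∂haarAddCircle := by
        rw [fourierCoeff]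
        refine integral_congr_ae (ae_of_all _ fun t => ?_)
        simp only [smul_eq_mul, map_mul, RCLike.conj_conj, ← fourier_neg]
        ring
    _ = ∑' j : ℤ, fourierCoeff f (k - j) * fourierCoeff g j := by
        simp only [integral_conj_mul_eq_tsum_fourierCoeff hF hg, fourierCoeff_fourier_mul_conj,
          RCLike.conj_conj]

end Parseval

lemma fc_eq_fourierCoeffOn (f : ℝ → ℂ) (k : ℤ) :
    fc f k = fourierCoeffOn (neg_lt_self pi_pos) f k := by
  have hπ : (π : ℂ) ≠ 0 := Complex.ofReal_ne_zero.mpr pi_ne_zero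
  rw [fourierCoeffOn_eq_integral, fc, sub_neg_eq_add, ← two_mul, Complex.real_smul]
  push_cast
  congr 1
  refine intervalIntegral.integral_congr fun x _ => ?_
  rw [fourier_coe_apply, smul_eq_mul, mul_comm]
  congr 2
  push_cast
  field_simp

lemma fourierCoeffOn_mul_eq_tsum {a b : ℝ} (hab : a < b) {f g : ℝ → ℂ}
    (hf : MemLp f 2 (volume.restrict (Set.Ioc a b)))
    (hg : MemLp g 2 (volume.restrict (Set.Ioc a b))) (k : ℤ) :
    fourierCoeffOn hab (fun x => f x * g x) k
      = ∑' j : ℤ, fourierCoeffOn hab f (k - j) * fourierCoeffOn hab g j := by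
  have := Fact.mk (sub_pos.mpr hab)
  rw [← add_sub_cancel a b] at hf hg
  exact fourierCoeff_mul_eq_tsum hf.memLp_liftIoc.haarAddCircle hg.memLp_liftIoc.haarAddCircle k

def bracket (i : ℤ) : ℝ := max 1 |(i : ℝ)|

lemma one_le_bracket (i : ℤ) : 1 ≤ bracket i := le_max_left _ _

lemma bracket_pos (i : ℤ) : 0 < bracket i := one_pos.trans_le (one_le_bracket i)

@[simp] lemma bracket_zero : bracket 0 = 1 := by simp [bracket]

lemma bracket_of_ne_zero {i : ℤ} (hi : i ≠ 0) : bracket i = |(i : ℝ)| :=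
  max_eq_right (by exact_mod_cast Int.one_le_abs hi)

lemma bracket_add_le (m j : ℤ) : bracket (m + j) ≤ 2 * max (bracket m) (bracket j) := by
  have hm : |(m : ℝ)| ≤ bracket m := le_max_right _ _
  have hj : |(j : ℝ)| ≤ bracket j := le_max_right _ _
  have := one_le_bracket m
  have := le_max_left (bracket m) (bracket j)
  have := le_max_right (bracket m) (bracket j)
  rw [bracket, Int.cast_add]
  exact max_le (by linarith) (by linarith [abs_add_le (m : ℝ) j])

lemma summable_bracket_rpow_neg {p : ℝ} (hp : 1 < p) :
    Summable fun j : ℤ => bracket j ^ (-p) := by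
  refine (summable_abs_int_rpow hp).of_norm_bounded_eventually ?_
  filter_upwards [(Set.finite_singleton (0 : ℤ)).compl_mem_cofinite] with j hj
  rw [bracket_of_ne_zero hj, Real.norm_of_nonneg (by positivity)]

lemma rpow_neg_mul_rpow_neg_le {x y p q : ℝ} (hx : 0 < x) (hy : 0 < y) (hqp : q ≤ p) :
    x ^ (-p) * y ^ (-q) ≤ max x y ^ (-q) * (x ^ (-p) + y ^ (-p)) := by
  rcases le_total x y with hxy | hyx
  · rw [max_eq_right hxy, mul_comm]
    gcongr
    exact le_add_of_nonneg_right (by positivity)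
  · rw [max_eq_left hyx]
    calc x ^ (-p) * y ^ (-q) = x ^ (-q) * (x ^ (q - p) * y ^ (-q)) := by
          rw [← mul_assoc, ← rpow_add hx]; ring_nf
      _ ≤ x ^ (-q) * (y ^ (q - p) * y ^ (-q)) := by
          have := rpow_le_rpow_of_nonpos hy hyx (sub_nonpos.mpr hqp)
          gcongr
      _ = x ^ (-q) * y ^ (-p) := by rw [← rpow_add hy]; ring_nf
      _ ≤ x ^ (-q) * (x ^ (-p) + y ^ (-p)) := by
          gcongr
          exact le_add_of_nonneg_left (by positivity)

lemma bracket_rpow_mul_le {p q : ℝ} (hq : 0 ≤ q) (hqp : q ≤ p) (m j : ℤ) :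
    bracket (m + j) ^ q * (bracket m ^ (-p) * bracket j ^ (-q))
      ≤ 2 ^ q * (bracket m ^ (-p) + bracket j ^ (-p)) := by
  set M := max (bracket m) (bracket j)
  have hM : 0 < M := (bracket_pos m).trans_le (le_max_left _ _)
  calc bracket (m + j) ^ q * (bracket m ^ (-p) * bracket j ^ (-q))
      ≤ (2 * M) ^ q * (M ^ (-q) * (bracket m ^ (-p) + bracket j ^ (-p))) := by
        refine mul_le_mul (rpow_le_rpow (bracket_pos _).le (bracket_add_le m j) hq)
          (rpow_neg_mul_rpow_neg_le (bracket_pos m) (bracket_pos j) hqp) ?_ (by positivity)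
        exact mul_nonneg (rpow_nonneg (bracket_pos m).le _) (rpow_nonneg (bracket_pos j).le _)
    _ = 2 ^ q * (bracket m ^ (-p) + bracket j ^ (-p)) := by
        rw [mul_rpow zero_le_two hM.le, rpow_neg hM.le]
        field_simp

lemma norm_le_mul_bracket_rpow_neg {R : Type*} [Norm R] {c : ℤ → R} {p A : ℝ}
    (hc : ∀ k : ℤ, k ≠ 0 → |(k : ℝ)| ^ p * ‖c k‖ ≤ A) (hc0 : ‖c 0‖ ≤ A) (k : ℤ) :
    ‖c k‖ ≤ A * bracket k ^ (-p) := by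
  rcases eq_or_ne k 0 with rfl | hk
  · simpa using hc0
  · rw [rpow_neg (bracket_pos k).le, ← div_eq_mul_inv,
      le_div_iff₀ (rpow_pos_of_pos (bracket_pos k) p), mul_comm, bracket_of_ne_zero hk]
    exact hc k hk

theorem bracket_rpow_mul_norm_tsum_mul_le {R : Type*} [NormedRing R] {p q A B : ℝ}
    (hp : 1 < p) (hq : 0 ≤ q) (hqp : q ≤ p) {c d : ℤ → R}
    (hc : ∀ i, ‖c i‖ ≤ A * bracket i ^ (-p)) (hd : ∀ i, ‖d i‖ ≤ B * bracket i ^ (-q)) (k : ℤ) :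
    bracket k ^ q * ‖∑' j, c (k - j) * d j‖ ≤ 2 ^ q * (2 * ∑' j, bracket j ^ (-p)) * A * B := by
  set w : ℤ → ℝ := fun j => bracket j ^ (-p)
  have hA : 0 ≤ A := by simpa using (norm_nonneg _).trans (hc 0)
  have hB : 0 ≤ B := by simpa using (norm_nonneg _).trans (hd 0)
  have hw : Summable w := summable_bracket_rpow_neg hp
  have hwk : Summable fun j => w (k - j) := (Equiv.subLeft k).summable_iff.mpr hw
  have hbk : 0 < bracket k ^ q := rpow_pos_of_pos (bracket_pos k) q
  have hterm : ∀ j, bracket k ^ q * ‖c (k - j) * d j‖ ≤ 2 ^ q * A * B * (w (k - j) + w j) := by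
    intro j
    calc bracket k ^ q * ‖c (k - j) * d j‖
        ≤ bracket k ^ q * (A * bracket (k - j) ^ (-p) * (B * bracket j ^ (-q))) := by
          refine mul_le_mul_of_nonneg_left ((norm_mul_le _ _).trans ?_) hbk.le
          exact mul_le_mul (hc _) (hd j) (norm_nonneg _) ((norm_nonneg _).trans (hc _))
      _ = A * B * (bracket (k - j + j) ^ q * (bracket (k - j) ^ (-p) * bracket j ^ (-q))) := by
          rw [sub_add_cancel]; ring
      _ ≤ A * B * (2 ^ q * (w (k - j) + w j)) :=
          mul_le_mul_of_nonneg_left (bracket_rpow_mul_le hq hqp (k - j) j) (mul_nonneg hA hB)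
      _ = 2 ^ q * A * B * (w (k - j) + w j) := by ring
  have hsum : Summable fun j => ‖c (k - j) * d j‖ := by
    refine (summable_mul_left_iff hbk.ne').mp ?_
    exact .of_nonneg_of_le (fun j => mul_nonneg hbk.le (norm_nonneg _)) hterm
      ((hwk.add hw).mul_left _)
  calc bracket k ^ q * ‖∑' j, c (k - j) * d j‖
      ≤ bracket k ^ q * ∑' j, ‖c (k - j) * d j‖ :=
        mul_le_mul_of_nonneg_left (norm_tsum_le_tsum_norm hsum) hbk.le
    _ = ∑' j, bracket k ^ q * ‖c (k - j) * d j‖ := tsum_mul_left.symm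
    _ ≤ ∑' j, 2 ^ q * A * B * (w (k - j) + w j) :=
        hsum.mul_left _ |>.tsum_le_tsum hterm ((hwk.add hw).mul_left _)
    _ = 2 ^ q * (2 * ∑' j, w j) * A * B := by
        have hshift : ∑' j, w (k - j) = ∑' j, w j := (Equiv.subLeft k).tsum_eq w
        rw [tsum_mul_left, hwk.tsum_add hw, hshift]
        ring

/-- If `u, v ∈ L²(𝕋¹)` have Fourier coefficients satisfying `|k|^p|û_k| ≤ 𝔲` and
`|k|^q|v̂_k| ≤ 𝔳` for `k ≠ 0` (with `|û_0| ≤ 𝔲`, `|v̂_0| ≤ 𝔳`), where `1 ≤ q < p`, then the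
product `w = uv` satisfies `|k|^q|ŵ_k| ≤ C_{p,q}·𝔲·𝔳` for all `k ≠ 0`, with `C_{p,q}`
depending only on `p` and `q`. -/
theorem stmt1 (p q : ℝ) (hq : 1 ≤ q) (hpq : q < p) :
    ∃ C : ℝ, 0 < C ∧
      ∀ (u v : ℝ → ℂ) (𝔲 𝔳 : ℝ),
        Function.Periodic u (2 * π) → Function.Periodic v (2 * π) →
        MemLp u 2 (volume.restrict (Set.Ioc (-π) π)) →
        MemLp v 2 (volume.restrict (Set.Ioc (-π) π)) →
        (∀ k : ℤ, k ≠ 0 → |(k : ℝ)| ^ p * ‖fc u k‖ ≤ 𝔲) → ‖fc u 0‖ ≤ 𝔲 →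
        (∀ k : ℤ, k ≠ 0 → |(k : ℝ)| ^ q * ‖fc v k‖ ≤ 𝔳) → ‖fc v 0‖ ≤ 𝔳 →
        ∀ k : ℤ, k ≠ 0 →
          |(k : ℝ)| ^ q * ‖fc (fun x => u x * v x) k‖ ≤ C * 𝔲 * 𝔳 := by
  have hp : 1 < p := hq.trans_lt hpq
  have hS : 0 < ∑' j : ℤ, bracket j ^ (-p) :=
    (summable_bracket_rpow_neg hp).tsum_pos (fun j => rpow_nonneg (bracket_pos j).le _) 0
      (by simp)
  refine ⟨2 ^ q * (2 * ∑' j : ℤ, bracket j ^ (-p)), by positivity, ?_⟩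
  intro u v 𝔲 𝔳 _ _ hu hv hu_dec hu_zero hv_dec hv_zero k hk
  simp only [fc_eq_fourierCoeffOn] at hu_dec hu_zero hv_dec hv_zero ⊢
  rw [fourierCoeffOn_mul_eq_tsum _ hu hv, ← bracket_of_ne_zero hk]
  exact bracket_rpow_mul_norm_tsum_mul_le hp (by linarith) hpq.le
    (norm_le_mul_bracket_rpow_neg hu_dec hu_zero) (norm_le_mul_bracket_rpow_neg hv_dec hv_zero) k
end

section
/- For any γ ∈ H¹(𝕋¹; ℝ^d) and any z ∈ 𝕋¹, the Poincaré-type inequality (1/2π)∫_{𝕋¹} |γ(x+z) - γ(x)|² dx ≤ 2(1 - cos z) · (1/2π)∫_{𝕋¹} |γ'(x)|² dx holds. -/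
open MeasureTheory Real Set Function intervalIntegral
open scoped Interval

/-!
Write `Δ x = γ (x + z) - γ x = ∫ u in 0..z, γ' (x + u)`. Swapping the integrals and using
periodicity, the `n`-th Fourier coefficient of `Δ` is `(∫ u in 0..z, exp (n u I)) • γ̂' n`, where
the factor has modulus `|2 sin (n z / 2) / n| ≤ 2 |sin (z / 2)|` for `n ≠ 0`, and `γ̂' 0 = 0`
because `γ` is periodic. As `4 sin² (z / 2) = 2 (1 - cos z)`, Parseval's identity turns this
coefficientwise bound into the inequality; vector-valued curves are treated coordinatewise.
-/

theorem abs_sin_nat_mul_le (n : ℕ) (t : ℝ) : |sin (n * t)| ≤ n * |sin t| := by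
  induction n with
  | zero => simp
  | succ n ih =>
    rw [Nat.cast_succ, add_mul, one_mul, sin_add]
    calc |sin (n * t) * cos t + cos (n * t) * sin t|
        ≤ |sin (n * t)| * |cos t| + |cos (n * t)| * |sin t| := by
          simpa only [abs_mul] using abs_add_le (sin (n * t) * cos t) (cos (n * t) * sin t)
      _ ≤ n * |sin t| * 1 + 1 * |sin t| := by
          gcongr
          exacts [abs_cos_le_one _, abs_cos_le_one _]
      _ = (n + 1) * |sin t| := by ring

theorem abs_sin_int_mul_le (n : ℤ) (t : ℝ) : |sin (n * t)| ≤ |n| * |sin t| := by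
  obtain ⟨m, rfl | rfl⟩ := Int.eq_nat_or_neg n <;>
    simpa [neg_mul, sin_neg, abs_neg] using abs_sin_nat_mul_le m t

theorem norm_intervalIntegral_exp_int_mul_I_le {n : ℤ} (hn : n ≠ 0) (z : ℝ) :
    ‖∫ u in (0 : ℝ)..z, Complex.exp (n * u * Complex.I)‖ ≤ 2 * |sin (z / 2)| := by
  have hc : (n * Complex.I : ℂ) ≠ 0 := mul_ne_zero (by exact_mod_cast hn) Complex.I_ne_zero
  have hn' : (0 : ℝ) < |(n : ℝ)| := by positivity
  simp_rw [mul_right_comm _ _ Complex.I]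
  rw [integral_exp_mul_complex hc, Complex.ofReal_zero, mul_zero, Complex.exp_zero, norm_div,
    mul_comm _ (z : ℂ), ← mul_assoc, mul_comm _ Complex.I, ← Complex.ofReal_intCast,
    ← Complex.ofReal_mul, Complex.norm_exp_I_mul_ofReal_sub_one]
  simp only [norm_mul, Complex.norm_I, Complex.norm_real, Real.norm_eq_abs, mul_one, abs_two]
  rw [div_le_iff₀ hn', show z * n / 2 = n * (z / 2) by ring]
  have := abs_sin_int_mul_le n (z / 2)
  push_cast at this
  nlinarith

section
variable {E : Type*} [NormedAddCommGroup E]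

theorem Continuous.memLp_restrict_Ioc {f : ℝ → E} (hf : Continuous f) (p : ENNReal) (a b : ℝ) :
    MemLp f p (volume.restrict (Ioc a b)) := by
  obtain ⟨C, hC⟩ := (isCompact_Icc (a := a) (b := b)).exists_bound_of_continuousOn hf.continuousOn
  refine MemLp.of_bound hf.aestronglyMeasurable C ?_
  exact (ae_restrict_iff' measurableSet_Ioc).2
    (ae_of_all _ fun x hx => hC x (Ioc_subset_Icc_self hx))

theorem integrableOn_comp_add_uIoc_prod {f : ℝ → E}
    (hf : ∀ a b : ℝ, IntervalIntegrable f volume a b) (a b c d : ℝ) :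
    IntegrableOn (fun p : ℝ × ℝ => f (p.1 + p.2)) (Ι a b ×ˢ Ι c d) := by
  set K := Ioc (min a b + min c d) (max a b + max c d)
  have hsub : Ι a b ×ˢ Ι c d ⊆ (fun p : ℝ × ℝ => (p.1, p.1 + p.2)) ⁻¹' (Ι a b ×ˢ K) := by
    rintro ⟨t, u⟩ ⟨⟨ht₁, ht₂⟩, hu₁, hu₂⟩
    exact ⟨⟨ht₁, ht₂⟩, by linarith, by linarith⟩
  have hK : IntegrableOn (fun q : ℝ × ℝ => f q.2) (Ι a b ×ˢ K) := by
    rw [IntegrableOn, Measure.volume_eq_prod, ← Measure.prod_restrict]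
    have : IsFiniteMeasure (volume.restrict (Ι a b)) := isFiniteMeasure_restrict_Ioc _ _
    exact (hf _ _).1.comp_snd _
  have := ((measurePreserving_prod_add volume volume).integrableOn_comp_preimage
    (MeasurableEquiv.shearAddRight ℝ).measurableEmbedding).2 hK
  exact this.mono_set hsub
end

section
variable {E : Type*} [NormedAddCommGroup E] [NormedSpace ℂ E] {a b : ℝ}

theorem fourierCoeffOn_intervalIntegral_comp_add {f : ℝ → E}
    (hf : ∀ a b : ℝ, IntervalIntegrable f volume a b) (hab : a < b) (c d : ℝ) (n : ℤ) :
    fourierCoeffOn hab (fun t => ∫ u in c..d, f (t + u)) n =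
      ∫ u in c..d, fourierCoeffOn hab (fun t => f (t + u)) n := by
  have hF : IntegrableOn (uncurry fun t u : ℝ => fourier (-n) (t : AddCircle (b - a)) • f (t + u))
      (Ι a b ×ˢ Ι c d) := by
    refine (integrableOn_comp_add_uIoc_prod hf a b c d).bdd_smul 1 ?_ (ae_of_all _ fun p => ?_)
    · exact ((map_continuous _).comp
        ((AddCircle.continuous_mk' _).comp continuous_fst)).aestronglyMeasurable
    · rw [fourier_apply, Circle.norm_coe]
  calc fourierCoeffOn hab (fun t => ∫ u in c..d, f (t + u)) n
      = (1 / (b - a)) •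
          ∫ t in a..b, ∫ u in c..d, fourier (-n) (t : AddCircle (b - a)) • f (t + u) := by
        simp only [fourierCoeffOn_eq_integral, intervalIntegral.integral_smul]
    _ = (1 / (b - a)) •
          ∫ u in c..d, ∫ t in a..b, fourier (-n) (t : AddCircle (b - a)) • f (t + u) := by
        rw [intervalIntegral_intervalIntegral_swap hF]
    _ = _ := by simp only [fourierCoeffOn_eq_integral, intervalIntegral.integral_smul]

theorem fourierCoeffOn_comp_add_right {f : ℝ → E} (hab : a < b) (hf : Periodic f (b - a))
    (u : ℝ) (n : ℤ) :
    fourierCoeffOn hab (fun t => f (t + u)) n =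
      fourier n (u : AddCircle (b - a)) • fourierCoeffOn hab f n := by
  set Φ : ℝ → E := fun s => fourier (-n) ((s - u : ℝ) : AddCircle (b - a)) • f s
  have hΦ : Periodic Φ (b - a) := fun s => by
    simp only [Φ, add_sub_right_comm s, AddCircle.coe_add_period, hf s]
  have hfourier : ∀ s : ℝ, fourier (-n) ((s - u : ℝ) : AddCircle (b - a)) =
      fourier n (u : AddCircle (b - a)) * fourier (-n) (s : AddCircle (b - a)) := fun s => by
    simp only [fourier_coe_apply, ← Complex.exp_add]
    congr 1
    push_cast
    ring
  rw [fourierCoeffOn_eq_integral, fourierCoeffOn_eq_integral, smul_comm (fourier n _ : ℂ)]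
  congr 1
  rw [← intervalIntegral.integral_smul]
  calc ∫ t in a..b, fourier (-n) (t : AddCircle (b - a)) • f (t + u)
      = ∫ t in a..b, Φ (t + u) := by simp only [Φ, add_sub_cancel_right]
    _ = ∫ s in a + u..b + u, Φ s := integral_comp_add_right Φ u
    _ = ∫ s in a..b, Φ s := by
      simpa only [add_sub_cancel, add_right_comm a u, add_sub_cancel_left]
        using hΦ.intervalIntegral_add_eq (a + u) a
    _ = _ := by simp only [Φ, hfourier, mul_smul]

theorem fourierCoeffOn_zero (hab : a < b) (f : ℝ → E) :
    fourierCoeffOn hab f 0 = (1 / (b - a)) • ∫ x in a..b, f x := by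
  simp [fourierCoeffOn_eq_integral]
end

theorem continuous_of_sub_eq_intervalIntegral {E : Type*} [NormedAddCommGroup E]
    [NormedSpace ℝ E] {g g' : ℝ → E} (hInt : ∀ a b : ℝ, IntervalIntegrable g' volume a b)
    (hFTC : ∀ a b : ℝ, g b - g a = ∫ x in a..b, g' x) : Continuous g := by
  have hg : g = fun x => g 0 + ∫ t in (0 : ℝ)..x, g' t := funext fun x => by
    rw [← hFTC, add_sub_cancel]
  rw [hg]
  exact continuous_const.add (continuous_primitive hInt 0)

theorem fourier_coe_apply_two_pi (n : ℤ) (x : ℝ) :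
    fourier n (x : AddCircle (π - -π)) = Complex.exp (n * x * Complex.I) := by
  rw [fourier_coe_apply]
  congr 1
  have : (π : ℂ) ≠ 0 := Complex.ofReal_ne_zero.2 pi_ne_zero
  push_cast
  field_simp
  ring

theorem norm_sq_fourierCoeffOn_sub_comp_add_le {E : Type*} [NormedAddCommGroup E]
    [NormedSpace ℂ E] [CompleteSpace E] {g g' : ℝ → E}
    (hper : Periodic g (2 * π)) (hper' : Periodic g' (2 * π))
    (hInt : ∀ a b : ℝ, IntervalIntegrable g' volume a b)
    (hFTC : ∀ a b : ℝ, g b - g a = ∫ x in a..b, g' x) (z : ℝ) (n : ℤ) :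
    ‖fourierCoeffOn (neg_lt_self pi_pos) (fun x => g (x + z) - g x) n‖ ^ 2 ≤
      2 * (1 - cos z) * ‖fourierCoeffOn (neg_lt_self pi_pos) g' n‖ ^ 2 := by
  have hT : π - -π = 2 * π := by ring
  have hΔ : (fun x => g (x + z) - g x) = fun x => ∫ u in (0 : ℝ)..z, g' (x + u) := by
    ext x
    rw [hFTC, integral_comp_add_left, add_zero]
  have hcoeff : fourierCoeffOn (neg_lt_self pi_pos) (fun x => g (x + z) - g x) n =
      (∫ u in (0 : ℝ)..z, Complex.exp (n * u * Complex.I)) •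
        fourierCoeffOn (neg_lt_self pi_pos) g' n := by
    simp only [hΔ, fourierCoeffOn_intervalIntegral_comp_add hInt,
      fourierCoeffOn_comp_add_right _ (hT ▸ hper'), fourier_coe_apply_two_pi]
    exact integral_smul_const _ _
  rcases eq_or_ne n 0 with rfl | hn
  · have hgπ : g π = g (-π) := by simpa only [show -π + 2 * π = π by ring] using hper (-π)
    have h₀ : fourierCoeffOn (neg_lt_self pi_pos) g' 0 = 0 := by
      rw [fourierCoeffOn_zero, ← hFTC, hgπ, sub_self, smul_zero]
    simp [hcoeff, h₀]
  rw [hcoeff, norm_smul, mul_pow]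
  gcongr
  calc ‖∫ u in (0 : ℝ)..z, Complex.exp (n * u * Complex.I)‖ ^ 2 ≤ (2 * |sin (z / 2)|) ^ 2 := by
        gcongr
        exact norm_intervalIntegral_exp_int_mul_I_le hn z
    _ = 2 * (1 - cos z) := by
        have h := cos_two_mul_eq_one_sub (z / 2)
        rw [mul_div_cancel₀ z two_ne_zero] at h
        rw [mul_pow, sq_abs]
        linear_combination 2 * h

theorem integral_norm_sq_sub_comp_add_le {g g' : ℝ → ℂ} (hper : Periodic g (2 * π))
    (hper' : Periodic g' (2 * π)) (hInt : ∀ a b : ℝ, IntervalIntegrable g' volume a b)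
    (hFTC : ∀ a b : ℝ, g b - g a = ∫ x in a..b, g' x)
    (hL2 : MemLp g' 2 (volume.restrict (Ioc (-π) π))) (z : ℝ) :
    (1 / (2 * π)) * ∫ x in -π..π, ‖g (x + z) - g x‖ ^ 2 ≤
      2 * (1 - cos z) * ((1 / (2 * π)) * ∫ x in -π..π, ‖g' x‖ ^ 2) := by
  have hg := continuous_of_sub_eq_intervalIntegral hInt hFTC
  have hΔ := hasSum_sq_fourierCoeffOn (neg_lt_self pi_pos)
    (((hg.comp (continuous_add_const z)).sub hg).memLp_restrict_Ioc 2 (-π) π)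
  have hg' := hasSum_sq_fourierCoeffOn (neg_lt_self pi_pos) hL2
  have := hasSum_le (norm_sq_fourierCoeffOn_sub_comp_add_le hper hper' hInt hFTC z) hΔ
    (hg'.mul_left (2 * (1 - cos z)))
  rwa [show π - -π = 2 * π by ring, smul_eq_mul, smul_eq_mul, ← one_div] at this

theorem ContinuousLinearMap.integral_norm_sq_sub_comp_add_le {E : Type*} [NormedAddCommGroup E]
    [NormedSpace ℝ E] [CompleteSpace E] (L : E →L[ℝ] ℂ) {γ γ' : ℝ → E}
    (hper : Periodic γ (2 * π)) (hper' : Periodic γ' (2 * π))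
    (hInt : ∀ a b : ℝ, IntervalIntegrable γ' volume a b)
    (hFTC : ∀ a b : ℝ, γ b - γ a = ∫ x in a..b, γ' x)
    (hL2 : MemLp γ' 2 (volume.restrict (Ioc (-π) π))) (z : ℝ) :
    (1 / (2 * π)) * ∫ x in -π..π, ‖L (γ (x + z)) - L (γ x)‖ ^ 2 ≤
      2 * (1 - cos z) * ((1 / (2 * π)) * ∫ x in -π..π, ‖L (γ' x)‖ ^ 2) :=
  _root_.integral_norm_sq_sub_comp_add_le (hper.comp L) (hper'.comp L)
    (fun a b => ⟨L.integrable_comp (hInt a b).1, L.integrable_comp (hInt a b).2⟩)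
    (fun a b => show L (γ b) - L (γ a) = ∫ x in a..b, L (γ' x) by
      rw [← map_sub, hFTC, L.intervalIntegral_comp_comm (hInt a b)])
    (L.comp_memLp' hL2) z

section
variable {ι : Type*} [Fintype ι]

/-- Coordinates are taken complex-valued because Parseval's identity is stated for `ℂ`. -/
noncomputable def complexCoord (i : ι) : EuclideanSpace ℝ ι →L[ℝ] ℂ :=
  Complex.ofRealCLM.comp (EuclideanSpace.proj i)

theorem intervalIntegral_norm_sq_eq_sum_complexCoord {f : ℝ → EuclideanSpace ℝ ι} {a b : ℝ}
    (hab : a ≤ b) (hf : MemLp f 2 (volume.restrict (Ioc a b))) :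
    ∫ x in a..b, ‖f x‖ ^ 2 = ∑ i, ∫ x in a..b, ‖complexCoord i (f x)‖ ^ 2 := by
  rw [← intervalIntegral.integral_finsetSum]
  · simp [complexCoord, EuclideanSpace.norm_sq_eq]
  · intro i _
    have hi := (complexCoord i).comp_memLp' hf
    rw [intervalIntegrable_iff_integrableOn_Ioc_of_le hab]
    exact (memLp_two_iff_integrable_sq_norm hi.aestronglyMeasurable).1 hi
end

/-- For `γ ∈ H¹(𝕋¹; ℝ^d)` (encoded as: `γ` is `2π`-periodic, is the primitive of a
locally integrable, `2π`-periodic function `γ'` which is square-integrable on a period)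
and any `z`, the Poincaré-type inequality
`(1/2π)∫|γ(x+z)-γ(x)|² dx ≤ 2(1-cos z)·(1/2π)∫|γ'(x)|² dx` holds. -/
theorem stmt2 (d : ℕ) (γ γ' : ℝ → EuclideanSpace ℝ (Fin d))
    (hper : Function.Periodic γ (2 * π))
    (hper' : Function.Periodic γ' (2 * π))
    (hInt : ∀ a b : ℝ, IntervalIntegrable γ' volume a b)
    (hFTC : ∀ a b : ℝ, γ b - γ a = ∫ x in a..b, γ' x)
    (hL2 : MemLp γ' 2 (volume.restrict (Set.Ioc (-π) π)))
    (z : ℝ) :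
    (1 / (2 * π)) * ∫ x in (-π)..π, ‖γ (x + z) - γ x‖ ^ 2 ≤
      2 * (1 - Real.cos z) * ((1 / (2 * π)) * ∫ x in (-π)..π, ‖γ' x‖ ^ 2) := by
  have hπ : -π ≤ π := (neg_lt_self pi_pos).le
  have hγ := continuous_of_sub_eq_intervalIntegral hInt hFTC
  have hΔ : MemLp (fun x => γ (x + z) - γ x) 2 (volume.restrict (Ioc (-π) π)) :=
    ((hγ.comp (continuous_add_const z)).sub hγ).memLp_restrict_Ioc 2 (-π) π
  rw [intervalIntegral_norm_sq_eq_sum_complexCoord hπ hΔ,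
    intervalIntegral_norm_sq_eq_sum_complexCoord hπ hL2, Finset.mul_sum, Finset.mul_sum,
    Finset.mul_sum]
  refine Finset.sum_le_sum fun i _ => ?_
  simpa only [map_sub] using
    (complexCoord i).integral_norm_sq_sub_comp_add_le hper hper' hInt hFTC hL2 z
end

section
/- Let τ: 𝕋¹ → ℝ³ be continuous with |τ(x)| ≡ 1, let v ∈ ℝ³ be a unit vector, and suppose x, y = x+π ∈ 𝕋¹ are antipodal points such that the induced curve γ_τ satisfies ⟨γ_τ(x), v⟩ = ⟨γ_τ(y), v⟩. Then |γ_τ(y) - γ_τ(x)| ≤ π·√(2λ) where λ := (1/2π)∫_{𝕋¹} (1 - ⟨v, τ(z)⟩²) dz. -/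
open MeasureTheory Real

/-!
Since `⟪γ(x+π) - γ(x), v⟫ = 0`, the chord `γ(x+π) - γ(x)` is also the integral over `[x, x+π]`
of the component of `τ` orthogonal to `v`, whose squared length is `1 - ⟪v, τ⟫²`. Cauchy–Schwarz on
this interval of length `π`, followed by nonnegativity of the integrand on the other half period,
gives `‖γ(x+π) - γ(x)‖² ≤ π ∫_{-π}^{π} (1 - ⟪v, τ⟫²) = 2π²λ`.
-/

section

variable {E : Type*} [NormedAddCommGroup E] [InnerProductSpace ℝ E]

theorem norm_sub_inner_smul_sq_of_norm_eq_one {v : E} (hv : ‖v‖ = 1) (u : E) :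
    ‖u - inner ℝ u v • v‖ ^ 2 = ‖u‖ ^ 2 - inner ℝ v u ^ 2 := by
  rw [norm_sub_sq_real, real_inner_smul_right, norm_smul, hv, real_inner_comm v u,
    Real.norm_eq_abs, mul_one, sq_abs]
  ring

theorem intervalIntegral_sub_inner_smul [CompleteSpace E] {τ : ℝ → E} {a b : ℝ}
    (hτ : IntervalIntegrable τ volume a b) (v : E) :
    ∫ z in a..b, (τ z - inner ℝ (τ z) v • v) =
      (∫ z in a..b, τ z) - inner ℝ (∫ z in a..b, τ z) v • v := by
  have hcomm : ∫ z in a..b, inner ℝ (τ z) v = inner ℝ (∫ z in a..b, τ z) v := by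
    simpa only [innerSL_apply_apply, real_inner_comm v] using
      (innerSL ℝ v).intervalIntegral_comp_comm hτ
  have hproj : IntervalIntegrable (fun z => inner ℝ (τ z) v • v) volume a b :=
    ⟨(hτ.1.inner_const v).smul_const v, (hτ.2.inner_const v).smul_const v⟩
  rw [intervalIntegral.integral_sub hτ hproj, intervalIntegral.integral_smul_const, hcomm]

end

theorem sq_intervalIntegral_le_mul {f : ℝ → ℝ} {a b : ℝ} (hab : a ≤ b)
    (hf : IntervalIntegrable f volume a b)
    (hf2 : IntervalIntegrable (fun z => f z ^ 2) volume a b) :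
    (∫ z in a..b, f z) ^ 2 ≤ (b - a) * ∫ z in a..b, f z ^ 2 := by
  rcases hab.eq_or_lt with rfl | hlt
  · simp
  -- `0 ≤ ∫ (f - t)²` with `t` the mean of `f` is the inequality
  set t := (∫ z in a..b, f z) / (b - a)
  have hsq : 0 ≤ ∫ z in a..b, (f z - t) ^ 2 :=
    intervalIntegral.integral_nonneg hab fun z _ => sq_nonneg _
  have hexpand : ∫ z in a..b, (f z - t) ^ 2
      = (∫ z in a..b, f z ^ 2) - 2 * t * (∫ z in a..b, f z) + t ^ 2 * (b - a) := by
    have hpoint (z : ℝ) : (f z - t) ^ 2 = f z ^ 2 - 2 * t * f z + t ^ 2 := by ring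
    simp_rw [hpoint]
    rw [intervalIntegral.integral_add (hf2.sub (hf.const_mul _)) intervalIntegrable_const,
      intervalIntegral.integral_sub hf2 (hf.const_mul _), intervalIntegral.integral_const_mul,
      intervalIntegral.integral_const, smul_eq_mul, mul_comm (b - a)]
  have hba : 0 < b - a := sub_pos.2 hlt
  have ht : ∫ z in a..b, f z = t * (b - a) := by simp only [t]; field_simp
  rw [hexpand, ht] at hsq
  rw [ht]
  nlinarith

theorem sq_norm_intervalIntegral_le_mul {E : Type*} [NormedAddCommGroup E] [NormedSpace ℝ E]
    {F : ℝ → E} {a b : ℝ} (hab : a ≤ b) (hF : IntervalIntegrable F volume a b)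
    (hF2 : IntervalIntegrable (fun z => ‖F z‖ ^ 2) volume a b) :
    ‖∫ z in a..b, F z‖ ^ 2 ≤ (b - a) * ∫ z in a..b, ‖F z‖ ^ 2 :=
  (pow_le_pow_left₀ (norm_nonneg _) (intervalIntegral.norm_integral_le_integral_norm hab) 2).trans
    (sq_intervalIntegral_le_mul hab hF.norm hF2)

theorem Function.Periodic.intervalIntegral_le_integral_period {g : ℝ → ℝ} {T h : ℝ}
    (hg : Function.Periodic g T) (hg0 : 0 ≤ g) (hh : 0 ≤ h) (hhT : h ≤ T) (x c : ℝ)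
    (hint : IntervalIntegrable g volume x (x + T)) :
    ∫ z in x..x + h, g z ≤ ∫ z in c..c + T, g z := by
  rw [← hg.intervalIntegral_add_eq x c]
  exact intervalIntegral.integral_mono_interval le_rfl (by linarith) (by linarith)
    (Filter.Eventually.of_forall hg0) hint

/-- Let `τ : 𝕋¹ → ℝ³` be continuous with `|τ| ≡ 1`, `v` a unit vector, and suppose the
induced curve `γ` (with `γ' = τ`) satisfies `⟨γ(x),v⟩ = ⟨γ(x+π),v⟩` at the antipodal pair
`x, x+π`.  Then `|γ(x+π)-γ(x)| ≤ π√(2λ)` where `λ = (1/2π)∫(1-⟨v,τ(z)⟩²)dz`. -/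
theorem stmt13 (τ γ : ℝ → EuclideanSpace ℝ (Fin 3))
    (v : EuclideanSpace ℝ (Fin 3)) (x : ℝ)
    (hcont : Continuous τ)
    (hper : Function.Periodic τ (2 * π))
    (hunit : ∀ z, ‖τ z‖ = 1)
    (hFTC : ∀ a b : ℝ, γ b - γ a = ∫ z in a..b, τ z)
    (hv : ‖v‖ = 1)
    (heq : (inner ℝ (γ x) v : ℝ) = (inner ℝ (γ (x + π)) v : ℝ)) :
    ‖γ (x + π) - γ x‖ ≤
      π * Real.sqrt (2 * ((1 / (2 * π)) * ∫ z in (-π)..π, (1 - ((inner ℝ v (τ z) : ℝ)) ^ 2))) := by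
  set g : ℝ → ℝ := fun z => 1 - inner ℝ v (τ z) ^ 2
  have hg : Continuous g := by fun_prop
  have hproj (z : ℝ) : ‖τ z - inner ℝ (τ z) v • v‖ ^ 2 = g z := by
    rw [norm_sub_inner_smul_sq_of_norm_eq_one hv, hunit, one_pow]
  have hchord : γ (x + π) - γ x = ∫ z in x..x + π, (τ z - inner ℝ (τ z) v • v) := by
    have hperp : inner ℝ (γ (x + π) - γ x) v = (0 : ℝ) := by rw [inner_sub_left, heq, sub_self]
    rw [intervalIntegral_sub_inner_smul (hcont.intervalIntegrable _ _), ← hFTC, hperp, zero_smul,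
      sub_zero]
  have hhalf : ‖γ (x + π) - γ x‖ ^ 2 ≤ π * ∫ z in x..x + π, g z := by
    have := sq_norm_intervalIntegral_le_mul (by linarith [pi_pos])
      ((by fun_prop : Continuous fun z => τ z - inner ℝ (τ z) v • v).intervalIntegrable x (x + π))
      (by simpa only [hproj] using hg.intervalIntegrable x (x + π))
    simpa only [hchord, hproj, add_sub_cancel_left] using this
  have hperiod : ∫ z in x..x + π, g z ≤ ∫ z in (-π)..π, g z := by
    have hgper : Function.Periodic g (2 * π) := fun z => by simp only [g, hper z]
    have := hgper.intervalIntegral_le_integral_period (fun z => hproj z ▸ sq_nonneg _) pi_pos.le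
      (by linarith [pi_pos]) x (-π) (hg.intervalIntegrable _ _)
    rwa [show -π + 2 * π = π by ring] at this
  have hrhs (I : ℝ) : π * √(2 * (1 / (2 * π) * I)) = √(π * I) :=
    calc π * √(2 * (1 / (2 * π) * I)) = √(π ^ 2) * √(2 * (1 / (2 * π) * I)) := by
          rw [Real.sqrt_sq pi_pos.le]
      _ = √(π * I) := by
          rw [← Real.sqrt_mul (sq_nonneg π)]
          field_simp
  rw [hrhs]
  exact Real.le_sqrt_of_sq_le (hhalf.trans (by gcongr))
end

section
/- Consider the standard double-covered circle tangent field τ_c(x) = γ'_dc(x) with γ_dc(x) = (1/2)(cos 2x, sin 2x, 0). With 𝔡_c := (1/2)τ_c' and 𝔟_c := τ_c × 𝔡_c, the perturbation ψ(x) = cos(3x)·τ_c(x) + (3/2)sin(3x)·𝔡_c(x) - 3cos(3x)·𝔟_c corresponds, for small ε > 0, to the standard trefoil curve lying on the torus (r-1/2)² + z² = ε² via τ = τ_c + εψ; in particular, ψ is smooth, 2π-periodic, has mean zero, and ⟨τ_c(x), ψ(x)⟩ = cos(3x)·|τ_c(x)|² for all x. -/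
open MeasureTheory Real

private lemma hd_cos (a k x : ℝ) :
    HasDerivAt (fun y : ℝ => a * Real.cos (k * y)) (-(a * k) * Real.sin (k * x)) x := by
  have := ((Real.hasDerivAt_cos (k * x)).comp x ((hasDerivAt_id x).const_mul k)).const_mul a
  simpa using this.congr_deriv (by ring)

private lemma hd_sin (a k x : ℝ) :
    HasDerivAt (fun y : ℝ => a * Real.sin (k * y)) ((a * k) * Real.cos (k * x)) x := by
  have := ((Real.hasDerivAt_sin (k * x)).comp x ((hasDerivAt_id x).const_mul k)).const_mul a
  simpa using this.congr_deriv (by ring)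

private lemma cd_cos (k : ℝ) : ContDiff ℝ (⊤ : ℕ∞) (fun x : ℝ => Real.cos (k * x)) :=
  Real.contDiff_cos.comp (contDiff_const.mul contDiff_id)

private lemma cd_sin (k : ℝ) : ContDiff ℝ (⊤ : ℕ∞) (fun x : ℝ => Real.sin (k * x)) :=
  Real.contDiff_sin.comp (contDiff_const.mul contDiff_id)

private lemma cos_per (a : ℝ) : Real.cos (a + 2 * π) = Real.cos a := Real.cos_add_two_pi a
private lemma sin_per (a : ℝ) : Real.sin (a + 2 * π) = Real.sin a := Real.sin_add_two_pi a

/-- The double-covered circle `γ_dc(x) = (1/2)(cos 2x, sin 2x, 0)` has tangent field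
`τ_c(x) = γ'_dc(x) = (-sin 2x, cos 2x, 0)`, with `𝔡_c = (1/2)τ_c'` and
`𝔟_c = τ_c × 𝔡_c = (0,0,1)`.  The trefoil perturbation
`ψ = cos(3x)τ_c + (3/2)sin(3x)𝔡_c - 3cos(3x)𝔟_c` is smooth, `2π`-periodic, has mean
zero, and satisfies `⟨τ_c(x), ψ(x)⟩ = cos(3x)|τ_c(x)|²` for all `x`. -/
theorem stmt19 :
    let τc : ℝ → Fin 3 → ℝ := fun x => ![-Real.sin (2 * x), Real.cos (2 * x), 0]
    let dc : ℝ → Fin 3 → ℝ := fun x => ![-Real.cos (2 * x), -Real.sin (2 * x), 0]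
    let bc : Fin 3 → ℝ := ![0, 0, 1]
    let ψ : ℝ → Fin 3 → ℝ := fun x =>
      Real.cos (3 * x) • τc x + ((3 / 2) * Real.sin (3 * x)) • dc x -
        (3 * Real.cos (3 * x)) • bc
    (∀ x : ℝ, HasDerivAt
        (fun y : ℝ => ((2 : ℝ)⁻¹ • ![Real.cos (2 * y), Real.sin (2 * y), 0] : Fin 3 → ℝ))
        (τc x) x) ∧
    (∀ x : ℝ, HasDerivAt τc ((2 : ℝ) • dc x) x) ∧
    (∀ x : ℝ, crossProduct (τc x) (dc x) = bc) ∧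
    ContDiff ℝ (⊤ : ℕ∞) ψ ∧
    Function.Periodic ψ (2 * π) ∧
    (∫ x in (-π)..π, ψ x) = 0 ∧
    ∀ x : ℝ, (∑ i, τc x i * ψ x i) = Real.cos (3 * x) * ∑ i, τc x i * τc x i := by
  intro τc dc bc ψ
  have hψ : ∀ x, ψ x = ![-Real.cos (3*x) * Real.sin (2*x) - (3/2) * Real.sin (3*x) * Real.cos (2*x),
      Real.cos (3*x) * Real.cos (2*x) - (3/2) * Real.sin (3*x) * Real.sin (2*x),
      -(3 * Real.cos (3*x))] := by
    intro x
    funext i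
    fin_cases i <;> simp [ψ, τc, dc, bc] <;> ring
  have hsmooth : ContDiff ℝ (⊤ : ℕ∞) ψ := by
    apply contDiff_pi.2
    intro i
    have := fun x => congrFun (hψ x) i
    fin_cases i <;> simp only [this] <;> simp
    · exact (((cd_cos 3).mul (cd_sin 2)).neg).sub (((contDiff_const.mul (cd_sin 3))).mul (cd_cos 2))
    · exact ((cd_cos 3).mul (cd_cos 2)).sub (((contDiff_const.mul (cd_sin 3))).mul (cd_sin 2))
    · exact (contDiff_const.mul (cd_cos 3)).neg
  refine ⟨?_, ?_, ?_, hsmooth, ?_, ?_, ?_⟩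
  · intro x
    rw [hasDerivAt_pi]
    intro i
    fin_cases i <;> simp [τc]
    · simpa using (hd_cos (2:ℝ)⁻¹ 2 x).congr_deriv (by ring)
    · simpa using (hd_sin (2:ℝ)⁻¹ 2 x).congr_deriv (by ring)
    · exact hasDerivAt_const x 0
  · intro x
    rw [hasDerivAt_pi]
    intro i
    fin_cases i <;> simp [τc, dc]
    · simpa using (hd_sin (-1:ℝ) 2 x).congr_deriv (by ring)
    · simpa using (hd_cos (1:ℝ) 2 x).congr_deriv (by ring)
    · exact hasDerivAt_const x 0
  · intro x
    funext i
    fin_cases i <;>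
      simp [crossProduct, τc, dc, bc] <;>
      nlinarith [Real.sin_sq_add_cos_sq (2*x)]
  · intro x
    have h3c : Real.cos (3*(x + 2*π)) = Real.cos (3*x) := by
      rw [show 3*(x + 2*π) = 3*x + 2*π + 2*π + 2*π by ring, cos_per, cos_per, cos_per]
    have h3s : Real.sin (3*(x + 2*π)) = Real.sin (3*x) := by
      rw [show 3*(x + 2*π) = 3*x + 2*π + 2*π + 2*π by ring, sin_per, sin_per, sin_per]
    have h2c : Real.cos (2*(x + 2*π)) = Real.cos (2*x) := by
      rw [show 2*(x + 2*π) = 2*x + 2*π + 2*π by ring, cos_per, cos_per]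
    have h2s : Real.sin (2*(x + 2*π)) = Real.sin (2*x) := by
      rw [show 2*(x + 2*π) = 2*x + 2*π + 2*π by ring, sin_per, sin_per]
    simp only [ψ, τc, dc, bc, h3c, h3s, h2c, h2s]
  · set F : ℝ → Fin 3 → ℝ := fun x =>
      ![(1/4) * Real.cos (5*x) + (1/4) * Real.cos (1*x),
        (1/4) * Real.sin (5*x) - (1/4) * Real.sin (1*x),
        -1 * Real.sin (3*x)] with hF
    have hder : ∀ x ∈ Set.uIcc (-π) π, HasDerivAt F (ψ x) x := by
      intro x _
      rw [hasDerivAt_pi]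
      have c0 : HasDerivAt (fun y : ℝ => (1/4) * Real.cos (5*y) + (1/4) * Real.cos (1*y))
          (-Real.cos (3*x) * Real.sin (2*x) - (3/2) * Real.sin (3*x) * Real.cos (2*x)) x := by
        refine ((hd_cos (1/4) 5 x).add (hd_cos (1/4) 1 x)).congr_deriv ?_
        rw [show (5:ℝ)*x = 3*x + 2*x by ring, show (1:ℝ)*x = 3*x - 2*x by ring,
          Real.sin_add, Real.sin_sub]
        ring
      have c1 : HasDerivAt (fun y : ℝ => (1/4) * Real.sin (5*y) - (1/4) * Real.sin (1*y))
          (Real.cos (3*x) * Real.cos (2*x) - (3/2) * Real.sin (3*x) * Real.sin (2*x)) x := by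
        refine ((hd_sin (1/4) 5 x).sub (hd_sin (1/4) 1 x)).congr_deriv ?_
        rw [show (5:ℝ)*x = 3*x + 2*x by ring, show (1:ℝ)*x = 3*x - 2*x by ring,
          Real.cos_add, Real.cos_sub]
        ring
      have c2 : HasDerivAt (fun y : ℝ => -1 * Real.sin (3*y)) (-(3 * Real.cos (3*x))) x := by
        refine (hd_sin (-1) 3 x).congr_deriv (by ring)
      intro i
      have := congrFun (hψ x) i
      fin_cases i <;> simp only [this, hF] <;> simp
      · simpa using c0
      · simpa using c1
      · simpa using c2
    have hint : IntervalIntegrable ψ MeasureTheory.volume (-π) π :=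
      hsmooth.continuous.intervalIntegrable _ _
    rw [intervalIntegral.integral_eq_sub_of_hasDerivAt hder hint]
    have c5 : Real.cos (5*π) = -1 := by
      rw [show (5:ℝ)*π = π + 2*π + 2*π by ring, cos_per, cos_per, Real.cos_pi]
    have s5 : Real.sin (5*π) = 0 := by
      rw [show (5:ℝ)*π = π + 2*π + 2*π by ring, sin_per, sin_per, Real.sin_pi]
    have s3 : Real.sin (3*π) = 0 := by
      rw [show (3:ℝ)*π = π + 2*π by ring, sin_per, Real.sin_pi]
    funext i
    fin_cases i <;>
      simp [hF, c5, s5, s3, mul_neg, Real.cos_neg, Real.sin_neg]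
  · intro x
    simp only [hψ x, τc, Fin.sum_univ_three]
    simp
    ring
end
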